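/- For every positive weight vector w, the function P^w(g,v) = Σ_{g'⊆g} λ_{g'}(v) / (Σ_{j∈N(g')} w_j) (with the empty network term interpreted as 0) satisfies P^w(∅,v)=0 and w_i (P^w(g,v) − P^w(g \ g_i, v)) = Y_i^{w-MV}(g,v) for every player i ∈ N(g), and consequently Σ_{i∈N(g)} w_i (P^w(g,v) − P^w(g\g_i,v)) = v(g). -/

import Mathlib

/-!
Since `P^w(g) = ∑_{∅ ≠ g' ⊆ g} λ_{g'} / w(N(g'))` and the subnetworks of `g \ g_i` are exactly
the subnetworks of `g` in which `i` is isolated, the difference `P^w(g) - P^w(g \ g_i)` keeps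
precisely the terms with `i ∈ N(g')`; multiplied by `w_i` these are the weighted Myerson payoffs.
Summing over `i ∈ N(g)`, every dividend is split among the players of its network in proportion
to the weights, so the total is `∑_{g' ⊆ g} λ_{g'}(v) = v(g)` by Möbius inversion on the
powerset lattice.
-/

open Finset

variable {n : ℕ}

/-- A network on player set `Fin n`: a finite set of (unordered) links. -/
abbrev Network (n : ℕ) := Finset (Sym2 (Fin n))

/-- The set of non-isolated players of a network. -/
def players (g : Network n) : Finset (Fin n) :=
  Finset.univ.filter (fun i => ∃ e ∈ g, i ∈ e)

/-- Harsanyi dividend of a value function at a network. -/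
noncomputable def dividend (v : Network n → ℝ) (g' : Network n) : ℝ :=
  ∑ g'' ∈ g'.powerset, (-1 : ℝ) ^ (g'.card - g''.card) * v g''

/-- The weighted Myerson value. -/
noncomputable def wMV (w : Fin n → ℝ) (v : Network n → ℝ) (g : Network n) (i : Fin n) : ℝ :=
  ∑ g' ∈ g.powerset.filter (fun g' => i ∈ players g'),
    (w i / ∑ j ∈ players g', w j) * dividend v g'

/-- Connectivity of two players through links of `g`. -/
def connectedIn (g : Network n) (i j : Fin n) : Prop :=
  Relation.ReflTransGen (fun a b => s(a, b) ∈ g) i j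

open Classical in
/-- The component of `g` containing the link `e`. -/
noncomputable def component (g : Network n) (e : Sym2 (Fin n)) : Network n :=
  g.filter (fun e' => ∃ i ∈ e, ∃ j ∈ e', connectedIn g i j)

/-- The set of components (maximal connected subnetworks) of `g`. -/
noncomputable def components (g : Network n) : Finset (Network n) :=
  g.image (component g)

/-- Component additive value functions. -/
def componentAdditive (v : Network n → ℝ) : Prop :=
  ∀ g : Network n, v g = ∑ h ∈ components g, v h

open Classical in
/-- The restriction `g|_S` of a network to a coalition `S`. -/
noncomputable def restrict (g : Network n) (S : Finset (Fin n)) : Network n :=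
  g.filter (fun e => ∀ i ∈ e, i ∈ S)

/-- The set `g_i` of links of player `i` in `g`. -/
def glinks (g : Network n) (i : Fin n) : Network n :=
  g.filter (fun e => i ∈ e)

/-- The weighted player potential function. -/
noncomputable def Pw (w : Fin n → ℝ) (v : Network n → ℝ) (g : Network n) : ℝ :=
  ∑ g' ∈ g.powerset.filter (fun g' => g' ≠ ∅),
    dividend v g' / ∑ j ∈ players g', w j

namespace Finset

variable {α R : Type*} [DecidableEq α] [Ring R]

theorem sum_Icc_neg_one_pow_card_sub {u s : Finset α} (h : u ⊆ s) :
    ∑ t ∈ Icc u s, (-1 : R) ^ (#t - #u) = if u = s then 1 else 0 := by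
  have hdisj : ∀ r ∈ (s \ u).powerset, Disjoint u r := fun r hr =>
    disjoint_sdiff.mono_right (mem_powerset.mp hr)
  rw [Icc_eq_image_powerset h, sum_image fun r₁ hr₁ r₂ hr₂ heq => by
    rw [← union_sdiff_cancel_left (hdisj r₁ hr₁), heq, union_sdiff_cancel_left (hdisj r₂ hr₂)]]
  calc ∑ r ∈ (s \ u).powerset, (-1 : R) ^ (#(u ∪ r) - #u)
      = ((∑ r ∈ (s \ u).powerset, (-1 : ℤ) ^ #r : ℤ) : R) := by
        push_cast
        refine sum_congr rfl fun r hr => ?_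
        rw [card_union_of_disjoint (hdisj r hr), Nat.add_sub_cancel_left]
    _ = if u = s then 1 else 0 := by
        have hsu : s ⊆ u ↔ u = s := ⟨h.antisymm, fun e => e ▸ subset_rfl⟩
        simp [sum_powerset_neg_one_pow_card, sdiff_eq_empty_iff_subset, hsu]

theorem sum_powerset_sum_powerset_neg_one_pow_card_sub_mul (f : Finset α → R) (s : Finset α) :
    ∑ t ∈ s.powerset, ∑ u ∈ t.powerset, (-1 : R) ^ (#t - #u) * f u = f s := by
  rw [sum_comm' (t' := s.powerset) (s' := fun u => Icc u s) fun t u => by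
    simp only [mem_powerset, mem_Icc]
    exact ⟨fun ⟨hts, hut⟩ => ⟨⟨hut, hts⟩, hut.trans hts⟩, fun ⟨⟨hut, hts⟩, _⟩ => ⟨hts, hut⟩⟩]
  simp_rw [← sum_mul]
  rw [sum_congr rfl fun u hu => by rw [sum_Icc_neg_one_pow_card_sub (mem_powerset.mp hu)]]
  simp

end Finset

theorem mem_players {g : Network n} {i : Fin n} : i ∈ players g ↔ ∃ e ∈ g, i ∈ e := by
  simp [players]

theorem players_mono {g' g : Network n} (h : g' ⊆ g) : players g' ⊆ players g := fun i hi => by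
  obtain ⟨e, he, hie⟩ := mem_players.mp hi
  exact mem_players.mpr ⟨e, h he, hie⟩

theorem players_eq_empty {g : Network n} : players g = ∅ ↔ g = ∅ := by
  simp only [eq_empty_iff_forall_notMem, mem_players, not_exists, not_and]
  exact ⟨fun h e he => e.ind (fun a _ he => h a _ he (Sym2.mem_mk_left _ _)) he,
    fun h _ e he => absurd he (h e)⟩

theorem subset_sdiff_glinks_iff {g' g : Network n} {i : Fin n} :
    g' ⊆ g \ glinks g i ↔ g' ⊆ g ∧ i ∉ players g' := by
  simp only [glinks, subset_iff, mem_sdiff, mem_filter, mem_players, not_exists, not_and]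
  exact ⟨fun h => ⟨fun _ he => (h he).1, fun e he => (h he).2 (h he).1⟩,
    fun ⟨h, hi⟩ e he => ⟨h he, fun _ => hi e he⟩⟩

theorem dividend_empty (v : Network n → ℝ) : dividend v ∅ = v ∅ := by
  simp [dividend]

theorem sum_powerset_dividend (v : Network n → ℝ) (g : Network n) :
    ∑ g' ∈ g.powerset, dividend v g' = v g :=
  sum_powerset_sum_powerset_neg_one_pow_card_sub_mul v g

theorem Pw_empty (w : Fin n → ℝ) (v : Network n → ℝ) : Pw w v ∅ = 0 := by
  simp [Pw, filter_singleton]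

theorem Pw_sub_Pw_sdiff_glinks (w : Fin n → ℝ) (v : Network n → ℝ) (g : Network n) (i : Fin n) :
    Pw w v g - Pw w v (g \ glinks g i) =
      ∑ g' ∈ g.powerset with i ∈ players g', dividend v g' / ∑ j ∈ players g', w j := by
  have hwith : {g' ∈ {g' ∈ g.powerset | g' ≠ ∅} | i ∈ players g'} =
      {g' ∈ g.powerset | i ∈ players g'} := by
    rw [filter_filter]
    refine filter_congr fun g' _ => ⟨And.right, fun hi => ⟨?_, hi⟩⟩
    rintro rfl
    simp [players_eq_empty.mpr rfl] at hi
  have hwithout : {g' ∈ {g' ∈ g.powerset | g' ≠ ∅} | i ∉ players g'} =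
      {g' ∈ (g \ glinks g i).powerset | g' ≠ ∅} := by
    ext g'
    simp only [mem_filter, mem_powerset, subset_sdiff_glinks_iff]
    tauto
  rw [Pw, ← sum_filter_add_sum_filter_not _ (fun g' => i ∈ players g'), hwith, hwithout, Pw,
    add_sub_cancel_right]

theorem mul_Pw_sub_Pw_sdiff_glinks (w : Fin n → ℝ) (v : Network n → ℝ) (g : Network n)
    (i : Fin n) : w i * (Pw w v g - Pw w v (g \ glinks g i)) = wMV w v g i := by
  rw [Pw_sub_Pw_sdiff_glinks, wMV, mul_sum]
  exact sum_congr rfl fun _ _ => by ring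

theorem sum_players_wMV {w : Fin n → ℝ} (hw : ∀ k, 0 < w k) {v : Network n → ℝ} (hv : v ∅ = 0)
    (g : Network n) : ∑ i ∈ players g, wMV w v g i = v g := by
  calc ∑ i ∈ players g, wMV w v g i
      = ∑ g' ∈ g.powerset, ∑ i ∈ players g', (w i / ∑ j ∈ players g', w j) * dividend v g' := by
        refine sum_comm' fun i g' => ?_
        simp only [mem_filter, mem_powerset]
        exact ⟨fun ⟨_, hg', hi⟩ => ⟨hi, hg'⟩, fun ⟨hi, hg'⟩ => ⟨players_mono hg' hi, hg', hi⟩⟩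
    _ = ∑ g' ∈ g.powerset, dividend v g' := by
        refine sum_congr rfl fun g' _ => ?_
        rw [← sum_mul, ← sum_div]
        rcases eq_or_ne g' ∅ with rfl | hg'
        · rw [dividend_empty, hv, mul_zero]
        · have hW : 0 < ∑ j ∈ players g', w j :=
            sum_pos (fun j _ => hw j) (nonempty_iff_ne_empty.mpr (players_eq_empty.not.mpr hg'))
          rw [div_self hW.ne', one_mul]
    _ = v g := sum_powerset_dividend v g

/-- `Pw` is a weighted player potential function whose weighted marginal contributions
are the weighted Myerson payoffs. -/
theorem Pw_potential (w : Fin n → ℝ) (hw : ∀ k, 0 < w k)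
    (v : Network n → ℝ) (hv : v ∅ = 0) :
    Pw w v (∅ : Network n) = 0 ∧
    ∀ g : Network n,
      (∀ i ∈ players g, w i * (Pw w v g - Pw w v (g \ glinks g i)) = wMV w v g i) ∧
      ∑ i ∈ players g, w i * (Pw w v g - Pw w v (g \ glinks g i)) = v g := by
  refine ⟨Pw_empty w v, fun g => ⟨fun i _ => mul_Pw_sub_Pw_sdiff_glinks w v g i, ?_⟩⟩
  rw [sum_congr rfl fun i _ => mul_Pw_sub_Pw_sdiff_glinks w v g i]
  exact sum_players_wMV hw hv g
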